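/- The composite of two polynomials (given by pullback, dependent product, and composition of the constituent functors) is again a polynomial: the composite of the polynomial functors induced by I ← A → B → J and J ← C → D → K is induced by a single polynomial I ← A' → D' → K. -/

import Mathlib

open CategoryTheory

/-- The polynomial functor `Set/I ⥤ Set/J` (in indexed-family form) induced by a
polynomial `I ←s– A –f→ B –t→ J`. -/
@[simps]
def polyFunctor {I J A B : Type} (s : A → I) (f : A → B) (t : B → J) :
    (∀ _ : I, Type) ⥤ (∀ _ : J, Type) where
  obj X j := Σ b : { b : B // t b = j }, ∀ a : { a : A // f a = b.1 }, X (s a.1)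
  map {X Y} η j := TypeCat.ofHom fun x => ⟨x.1, fun a => η (s a.1) (x.2 a)⟩

/-!
Evaluated at `X` and `k`, the composite functor is
`Σ (d ∈ v⁻¹ k), Π (c ∈ g⁻¹ d), Σ (b ∈ t⁻¹ (u c)), Π (a ∈ f⁻¹ b), X (s a)`.
Commuting the inner `Σ` past the `Π` over `c` (the type-theoretic axiom of choice, i.e. the
distributivity law for `Π_g`) and merging the two `Π`s into a single `Π` over a `Σ` puts this
in the form `Σ (d' ∈ t'⁻¹ k), Π (a' ∈ f'⁻¹ d'), X (s' a')`, with `D'` the type of pairs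
`(d, Π (c ∈ g⁻¹ d), t⁻¹ (u c))` and `A'` the type of triples `(d', c, a ∈ f⁻¹ (d'.2 c))`.
-/

namespace PolyComp

variable {I J K A B C D : Type}
  (s : A → I) (f : A → B) (t : B → J) (u : C → J) (g : C → D) (v : D → K)

def D' : Type := Σ d : D, ∀ c : {c : C // g c = d}, {b : B // t b = u c.1}

def A' : Type := Σ d' : D' t u g, Σ c : {c : C // g c = d'.1}, {a : A // f a = (d'.2 c).1}

def s' (a' : A' f t u g) : I := s a'.2.2.1

def f' (a' : A' f t u g) : D' t u g := a'.1

def t' (d' : D' t u g) : K := v d'.1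

def objEquiv (X : I → Type) (k : K) :
    (polyFunctor s f t ⋙ polyFunctor u g v).obj X k ≃
      (polyFunctor (s' s f t u g) (f' f t u g) (t' t u g v)).obj X k where
  toFun x := ⟨⟨⟨x.1.1, fun c => (x.2 c).1⟩, x.1.2⟩, fun
    | ⟨⟨_, c, a⟩, rfl⟩ => (x.2 c).2 a⟩
  invFun y := ⟨⟨y.1.1.1, y.1.2⟩, fun c => ⟨y.1.1.2 c, fun a => y.2 ⟨⟨y.1.1, c, a⟩, rfl⟩⟩⟩
  left_inv _ := rfl
  right_inv := by
    rintro ⟨b, χ⟩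
    refine congrArg (Sigma.mk b) (funext ?_)
    rintro ⟨⟨_, _, _⟩, h⟩
    cases h
    rfl

def iso : polyFunctor s f t ⋙ polyFunctor u g v ≅
    polyFunctor (s' s f t u g) (f' f t u g) (t' t u g v) :=
  NatIso.ofComponents (fun X => Pi.isoMk fun k => (objEquiv s f t u g v X k).toIso) <| by
    intro X Y η
    funext k
    ext ⟨b, φ⟩
    refine congrArg (Sigma.mk _) (funext ?_)
    rintro ⟨⟨_, _, _⟩, h⟩
    cases h
    rfl

end PolyComp

/-- Gambino–Kock, Prop. 1.12: the composite of the polynomial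
functors induced by `I ← A → B → J` and `J ← C → D → K` is induced by a single
polynomial `I ← A' → D' → K`. -/
theorem polyFunctor_comp {I J K A B C D : Type}
    (s : A → I) (f : A → B) (t : B → J)
    (u : C → J) (g : C → D) (v : D → K) :
    ∃ (A' D' : Type) (s' : A' → I) (f' : A' → D') (t' : D' → K),
      Nonempty (polyFunctor s f t ⋙ polyFunctor u g v ≅ polyFunctor s' f' t') :=
  ⟨_, _, _, _, _, ⟨PolyComp.iso s f t u g v⟩⟩
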